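/- Let p be a monic hyperbolic polynomial of degree m and let q separate p. Let H = (h_{ij}) be the Bézout matrix of p and q, and A the Sylvester (companion) matrix of p. Then H is nonnegative definite (positive semidefinite Hermitian) and HA is symmetric. -/

import Mathlib

/-!
Write `p = g ω` with `ω = ∏ (X - λₖ)` and `g = ∏ (X - λₖ)^(rₖ - 1)`, so that `q = g Q`,
`deg Q < deg ω`. Lagrange interpolation at the `λₖ` gives `Q = ∑ ρₖ ωₖ` with
`ωₖ = ω / (X - λₖ)` and `ρₖ = Q(λₖ) / ωₖ(λₖ)`; interlacing pairs each factor `λₖ - μⱼ` of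
`Q(λₖ)` with a factor of `ωₖ(λₖ)` of the same sign, so `ρₖ > 0`. Hence
`p(x)q(y) - p(y)q(x) = (x - y) ∑ ρₖ Lₖ(x) Lₖ(y)` with `Lₖ = g ωₖ`, i.e. `H = ∑ ρₖ ℓₖ ℓₖᵀ` for
the coefficient vectors `ℓₖ` of the `Lₖ`.

For `HA`, put `v(y) = (1, y, …, y^(m-1))`, so `A v(y) = y v(y) - p(y) eₘ`. The last column of
`H` is the coefficient vector of `q`, so `v(x)ᵀ H A v(y) = y B(x, y) - p(y) q(x)` with
`B(x, y) = v(x)ᵀ H v(y) = B(y, x)`, and the antisymmetric part of this is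
`(y - x) B(x, y) + p(x) q(y) - p(y) q(x) = 0`.

Throughout, a matrix is determined by its bilinear form on the vectors `v(x)`, `v(y)` with
`x ≠ y`, by invertibility of Vandermonde matrices.
-/

open Polynomial Matrix Finset Lagrange

/-- The companion (Sylvester) matrix of a monic polynomial `p` of degree `m`. -/
noncomputable def companionMatrix (m : ℕ) (p : Polynomial ℝ) : Matrix (Fin m) (Fin m) ℝ :=
  Matrix.of fun i j =>
    if (i : ℕ) + 1 = (j : ℕ) then 1 else if (i : ℕ) = m - 1 then -p.coeff (j : ℕ) else 0

def powVec {R : Type*} [Monoid R] (n : ℕ) (x : R) : Fin n → R := fun i => x ^ (i : ℕ)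

section PowVec

variable {R : Type*} [CommSemiring R] {n : ℕ}

theorem dotProduct_mulVec_powVec (H : Matrix (Fin n) (Fin n) R) (x y : R) :
    powVec n x ⬝ᵥ H *ᵥ powVec n y = ∑ i, ∑ j, H i j * x ^ (i : ℕ) * y ^ (j : ℕ) := by
  simp only [dotProduct, mulVec, powVec, mul_sum]
  exact sum_congr rfl fun i _ => sum_congr rfl fun j _ => by ring

theorem Polynomial.eval_ofFn [DecidableEq R] (w : Fin n → R) (y : R) :
    (ofFn n w).eval y = w ⬝ᵥ powVec n y := by
  simp [ofFn_eq_sum_monomial, eval_finsetSum, dotProduct, powVec]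

theorem Polynomial.eval_eq_toFn_dotProduct_powVec {f : R[X]} (hf : f.natDegree < n) (y : R) :
    f.eval y = toFn n f ⬝ᵥ powVec n y := by
  classical
  rw [← eval_ofFn, ofFn_comp_toFn_eq_id_of_natDegree_lt hf]

theorem Polynomial.Monic.eval_eq_sum_fin_add_pow {p : R[X]} (hp : p.Monic)
    (hdeg : p.natDegree = n) (y : R) :
    p.eval y = ∑ j : Fin n, p.coeff j * y ^ (j : ℕ) + y ^ n := by
  rw [eval_eq_sum_range, hdeg, sum_range_succ, ← hdeg, hp.coeff_natDegree, one_mul, hdeg,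
    Fin.sum_univ_eq_sum_range (fun j => p.coeff j * y ^ j)]

end PowVec

/-- The nodes `0, …, n - 1` and `n, …, 2n - 1` are disjoint, so the hypothesis gives
`V G Wᵀ = V G' Wᵀ` for the (invertible) Vandermonde matrices `V`, `W` of these nodes. -/
theorem Matrix.ext_of_dotProduct_mulVec_powVec {K : Type*} [Field K] [CharZero K] {n : ℕ}
    {G G' : Matrix (Fin n) (Fin n) K}
    (h : ∀ x y, x ≠ y → powVec n x ⬝ᵥ G *ᵥ powVec n y = powVec n x ⬝ᵥ G' *ᵥ powVec n y) :
    G = G' := by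
  set a : Fin n → K := fun i => ((i : ℕ) : K)
  set b : Fin n → K := fun j => ((n + j : ℕ) : K)
  have ha : Function.Injective a := fun i j hij => Fin.ext (Nat.cast_injective hij)
  have hb : Function.Injective b := fun i j hij => Fin.ext (by simpa [b] using hij)
  have hab : ∀ i j, a i ≠ b j := fun i j hij => by
    have := Nat.cast_injective hij
    omega
  have hVa : IsUnit (vandermonde a) :=
    (isUnit_iff_isUnit_det _).2 (det_vandermonde_ne_zero_iff.2 ha).isUnit
  have hVb : IsUnit (vandermonde b)ᵀ :=
    (isUnit_iff_isUnit_det _).2 (by simpa using (det_vandermonde_ne_zero_iff.2 hb).isUnit)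
  refine hVa.mul_left_cancel (hVb.mul_right_cancel ?_)
  ext i j
  rw [mul_mul_apply, mul_mul_apply, transpose_transpose]
  exact h _ _ (hab i j)

theorem posSemidef_of_dotProduct_mulVec_powVec_eq_sum {n : ℕ} {ι : Type*} [Fintype ι]
    {H : Matrix (Fin n) (Fin n) ℝ} {ρ : ι → ℝ} (hρ : ∀ k, 0 ≤ ρ k) {L : ι → ℝ[X]}
    (hL : ∀ k, (L k).natDegree < n)
    (h : ∀ x y, x ≠ y →
      powVec n x ⬝ᵥ H *ᵥ powVec n y = ∑ k, ρ k * (L k).eval x * (L k).eval y) :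
    H.PosSemidef := by
  have hH : H = ∑ k, ρ k • vecMulVec (toFn n (L k)) (toFn n (L k)) :=
    ext_of_dotProduct_mulVec_powVec fun x y hxy => by
      simp only [h x y hxy, eval_eq_toFn_dotProduct_powVec (hL _), dotProduct_comm, sum_mulVec,
        smul_mulVec, vecMulVec_mulVec, op_smul_eq_smul, dotProduct_sum, dotProduct_smul,
        smul_eq_mul]
      exact sum_congr rfl fun k _ => by ring
  rw [hH]
  exact posSemidef_sum _ fun k _ => by
    simpa using (posSemidef_vecMulVec_self_star (toFn n (L k))).smul (hρ k)

section Companion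

variable {n : ℕ}

theorem companionMatrix_castSucc (p : ℝ[X]) (i : Fin n) :
    companionMatrix (n + 1) p i.castSucc = Pi.single i.succ 1 := by
  ext j
  have : n ≠ (i : ℕ) := i.isLt.ne'
  simp [companionMatrix, Pi.single_apply, Fin.ext_iff, this, eq_comm]

theorem companionMatrix_last (p : ℝ[X]) :
    companionMatrix (n + 1) p (Fin.last n) = -fun j : Fin (n + 1) => p.coeff j := by
  ext j
  simp [companionMatrix, j.isLt.ne']

theorem companionMatrix_mulVec_powVec {p : ℝ[X]} (hp : p.Monic) (hdeg : p.natDegree = n + 1)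
    (y : ℝ) :
    companionMatrix (n + 1) p *ᵥ powVec (n + 1) y
      = y • powVec (n + 1) y - p.eval y • Pi.single (Fin.last n) 1 := by
  ext i
  rcases Fin.eq_castSucc_or_eq_last i with ⟨i, rfl⟩ | rfl
  · simp [mulVec, companionMatrix_castSucc, powVec, pow_succ', Fin.castSucc_ne_last]
  · simp [mulVec, companionMatrix_last, dotProduct, powVec, hp.eval_eq_sum_fin_add_pow hdeg,
      pow_succ']

end Companion

section Bezout

variable {K : Type*} [Field K] [CharZero K] {n : ℕ}

def IsBezoutMatrix (p q : K[X]) (H : Matrix (Fin n) (Fin n) K) : Prop :=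
  ∀ x y, (x - y) * (powVec n x ⬝ᵥ H *ᵥ powVec n y) = p.eval x * q.eval y - p.eval y * q.eval x

variable {p q : K[X]}

theorem IsBezoutMatrix.isSymm {H : Matrix (Fin n) (Fin n) K} (hH : IsBezoutMatrix p q H) :
    H.IsSymm := by
  refine ext_of_dotProduct_mulVec_powVec fun x y hxy => ?_
  rw [dotProduct_transpose_mulVec]
  refine mul_left_cancel₀ (sub_ne_zero.2 hxy) ?_
  linear_combination -hH x y - hH y x

/-- Compares the coefficients of `y ^ (n + 1)` in the defining identity, read as polynomials
in `y`. -/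
theorem IsBezoutMatrix.dotProduct_mulVec_single_last {H : Matrix (Fin (n + 1)) (Fin (n + 1)) K}
    (hH : IsBezoutMatrix p q H) (hp : p.Monic) (hdeg : p.natDegree = n + 1)
    (hq : q.natDegree ≤ n) (x : K) :
    powVec (n + 1) x ⬝ᵥ H *ᵥ Pi.single (Fin.last n) 1 = q.eval x := by
  classical
  set w := vecMul (powVec (n + 1) x) H
  have hpoly : (C x - X) * ofFn (n + 1) w = C (p.eval x) * q - C (q.eval x) * p :=
    funext fun y => by simp [eval_ofFn, w, ← dotProduct_mulVec, hH x y, mul_comm]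
  have hp1 : p.coeff (n + 1) = 1 := hdeg ▸ hp.coeff_natDegree
  have hq0 : q.coeff (n + 1) = 0 := coeff_eq_zero_of_natDegree_lt (Nat.lt_succ_of_le hq)
  have hw0 : (ofFn (n + 1) w).coeff (n + 1) = 0 := ofFn_coeff_eq_zero_of_ge _ le_rfl
  have hwn : (ofFn (n + 1) w).coeff n = w (Fin.last n) := ofFn_coeff_eq_val_of_lt _ n.lt_succ_self
  have hcoeff := congrArg (coeff · (n + 1)) hpoly
  simp only [sub_mul, coeff_sub, coeff_C_mul, coeff_X_mul, hw0, hwn, hp1, hq0] at hcoeff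
  rw [dotProduct_mulVec, dotProduct_single_one]
  linear_combination -hcoeff

theorem IsBezoutMatrix.mul_companionMatrix_isSymm {p q : ℝ[X]}
    {H : Matrix (Fin (n + 1)) (Fin (n + 1)) ℝ} (hH : IsBezoutMatrix p q H) (hp : p.Monic)
    (hdeg : p.natDegree = n + 1) (hq : q.natDegree ≤ n) :
    (H * companionMatrix (n + 1) p).IsSymm := by
  have hswap : ∀ x y, powVec (n + 1) y ⬝ᵥ H *ᵥ powVec (n + 1) x
      = powVec (n + 1) x ⬝ᵥ H *ᵥ powVec (n + 1) y := fun x y => by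
    rw [← dotProduct_transpose_mulVec, hH.isSymm.eq]
  have hshift : ∀ x y,
      powVec (n + 1) x ⬝ᵥ (H * companionMatrix (n + 1) p) *ᵥ powVec (n + 1) y
        = y * (powVec (n + 1) x ⬝ᵥ H *ᵥ powVec (n + 1) y) - p.eval y * q.eval x := fun x y => by
    rw [← mulVec_mulVec, companionMatrix_mulVec_powVec hp hdeg, mulVec_sub, mulVec_smul,
      mulVec_smul, dotProduct_sub, dotProduct_smul, dotProduct_smul,
      hH.dotProduct_mulVec_single_last hp hdeg hq, smul_eq_mul, smul_eq_mul]
  refine ext_of_dotProduct_mulVec_powVec fun x y _ => ?_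
  rw [dotProduct_transpose_mulVec, hshift, hshift, hswap]
  linear_combination hH x y

end Bezout

section Nodal

variable {R : Type*} [CommRing R] {ι : Type*} [Fintype ι] [DecidableEq ι] (v ρ : ι → R)

theorem bezoutian_eval_mul_nodal_eq_sum (g : R[X]) (x y : R) :
    (g * nodal univ v).eval x * (g * ∑ k, C (ρ k) * nodal (univ.erase k) v).eval y
      - (g * nodal univ v).eval y * (g * ∑ k, C (ρ k) * nodal (univ.erase k) v).eval x
      = (x - y) * ∑ k, ρ k * (g * nodal (univ.erase k) v).eval x
          * (g * nodal (univ.erase k) v).eval y := by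
  have hP : ∀ z k, (nodal univ v).eval z = (z - v k) * (nodal (univ.erase k) v).eval z :=
    fun z k => by simp [nodal_eq_mul_nodal_erase (mem_univ k)]
  simp only [eval_mul, eval_finsetSum, eval_C, mul_sum, ← sum_sub_distrib]
  refine sum_congr rfl fun k _ => ?_
  rw [hP x k, hP y k]
  ring

variable [Nontrivial R] {g : R[X]}

theorem natDegree_mul_nodal_erase_lt (hg : g.Monic) (k : ι) :
    (g * nodal (univ.erase k) v).natDegree < (g * nodal univ v).natDegree := by
  rw [nodal_eq_mul_nodal_erase (mem_univ k), mul_left_comm,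
    (monic_X_sub_C _).natDegree_mul (hg.mul nodal_monic), natDegree_X_sub_C]
  omega

theorem natDegree_mul_sum_nodal_erase_lt [Nonempty ι] (hg : g.Monic) :
    (g * ∑ k, C (ρ k) * nodal (univ.erase k) v).natDegree < (g * nodal univ v).natDegree := by
  have hpos := natDegree_mul_nodal_erase_lt v hg (Classical.arbitrary ι)
  rw [mul_sum]
  refine (natDegree_sum_le_of_forall_le _ _ fun k _ => ?_).trans_lt (Nat.sub_lt (by omega) one_pos)
  rw [mul_left_comm]
  have := natDegree_mul_nodal_erase_lt v hg k
  exact natDegree_C_mul_le _ _ |>.trans (by omega)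

end Nodal

theorem IsBezoutMatrix.posSemidef_of_mul_nodal {n : ℕ} {ι : Type*} [Fintype ι] [DecidableEq ι]
    {v ρ : ι → ℝ} (hρ : ∀ k, 0 ≤ ρ k) {g : ℝ[X]} (hg : g.Monic)
    (hdeg : (g * nodal univ v).natDegree = n) {H : Matrix (Fin n) (Fin n) ℝ}
    (hH : IsBezoutMatrix (g * nodal univ v) (g * ∑ k, C (ρ k) * nodal (univ.erase k) v) H) :
    H.PosSemidef :=
  posSemidef_of_dotProduct_mulVec_powVec_eq_sum hρ
    (fun k => hdeg ▸ natDegree_mul_nodal_erase_lt v hg k) fun x y hxy =>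
      mul_left_cancel₀ (sub_ne_zero.2 hxy) (by rw [hH x y, bezoutian_eval_mul_nodal_eq_sum])

section Interlacing

variable {t : ℕ} {lam : Fin (t + 1) → ℝ} {mu : Fin t → ℝ}

theorem Fin.prod_univ_erase_eq_prod_succAbove {M : Type*} [CommMonoid M]
    (f : Fin (t + 1) → M) (k : Fin (t + 1)) :
    ∏ i ∈ univ.erase k, f i = ∏ j : Fin t, f (k.succAbove j) := by
  rw [Fin.univ_succAbove t k, erase_cons, prod_map, Fin.coe_succAboveEmb]

theorem interlacing_ratio_pos (hlam : StrictMono lam)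
    (hint : ∀ j : Fin t, lam j.castSucc < mu j ∧ mu j < lam j.succ)
    (k : Fin (t + 1)) (j : Fin t) :
    0 < (lam k - mu j) * (lam k - lam (k.succAbove j))⁻¹ := by
  rcases lt_or_ge j.castSucc k with h | h
  · rw [Fin.succAbove_of_castSucc_lt k j h]
    have : lam j.succ ≤ lam k := hlam.monotone (Fin.castSucc_lt_iff_succ_le.1 h)
    exact mul_pos (by linarith [(hint j).2]) (inv_pos.2 (sub_pos.2 (hlam h)))
  · rw [Fin.succAbove_of_le_castSucc k j h]
    have : lam k ≤ lam j.castSucc := hlam.monotone h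
    have : lam j.castSucc < lam j.succ := hlam Fin.castSucc_lt_succ
    exact mul_pos_of_neg_of_neg (by linarith [(hint j).1]) (inv_lt_zero.2 (by linarith))

theorem exists_pos_sum_nodal_erase_eq_of_interlacing (hlam : StrictMono lam)
    (hint : ∀ j : Fin t, lam j.castSucc < mu j ∧ mu j < lam j.succ) {c : ℝ} (hc : 0 < c) :
    ∃ ρ : Fin (t + 1) → ℝ, (∀ k, 0 < ρ k) ∧
      C c * ∏ j, (X - C (mu j)) = ∑ k, C (ρ k) * nodal (univ.erase k) lam := by
  set Q := C c * ∏ j, (X - C (mu j))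
  refine ⟨fun k => Q.eval (lam k) * nodalWeight univ lam k, fun k => ?_, ?_⟩
  · have hQ : Q.eval (lam k) = c * ∏ j, (lam k - mu j) := by simp [Q, eval_prod]
    change 0 < Q.eval (lam k) * nodalWeight univ lam k
    rw [hQ, nodalWeight, Fin.prod_univ_erase_eq_prod_succAbove, mul_assoc, ← prod_mul_distrib]
    exact mul_pos hc (prod_pos fun j _ => interlacing_ratio_pos hlam hint k j)
  · have hdeg : Q.degree < #(univ : Finset (Fin (t + 1))) := by
      simp only [Q, degree_C_mul hc.ne', degree_prod, degree_X_sub_C, sum_const, card_univ,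
        Fintype.card_fin, nsmul_eq_mul, mul_one]
      exact_mod_cast Nat.lt_succ_self t
    conv_lhs => rw [eq_interpolate hlam.injective.injOn hdeg, interpolate_apply]
    refine sum_congr rfl fun k _ => ?_
    rw [basis_eq_prod_sub_inv_mul_nodal_div (mem_univ k), ← nodal_erase_eq_nodal_div (mem_univ k),
      C_mul, mul_assoc]

end Interlacing

/-- If `p` is monic hyperbolic and `q` separates `p`, then the Bézout matrix `H` of
`p` and `q` is positive semidefinite and `H·A` is symmetric, `A` being the companion
matrix of `p`. -/
theorem bezout_matrix_symmetrizes (t m : ℕ) (lam : Fin (t + 1) → ℝ)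
    (hlam : StrictMono lam)
    (r : Fin (t + 1) → ℕ) (hr : ∀ j, 1 ≤ r j) (hm : m = ∑ j, r j)
    (p : Polynomial ℝ) (hp : p = ∏ j, (X - C (lam j)) ^ (r j))
    (mu : Fin t → ℝ) (hint : ∀ j : Fin t, lam j.castSucc < mu j ∧ mu j < lam j.succ)
    (c : ℝ) (hc : 0 < c)
    (q : Polynomial ℝ)
    (hq : q = C c * (∏ j, (X - C (lam j)) ^ (r j - 1)) * ∏ j, (X - C (mu j)))
    (H : Matrix (Fin m) (Fin m) ℝ)
    (hH : ∀ x y : ℝ,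
      (x - y) * ∑ i : Fin m, ∑ j : Fin m, H i j * x ^ (i : ℕ) * y ^ (j : ℕ)
        = p.eval x * q.eval y - p.eval y * q.eval x) :
    H.PosSemidef ∧ (H * companionMatrix m p).IsSymm := by
  set g := ∏ j, (X - C (lam j)) ^ (r j - 1)
  have hg : g.Monic := monic_prod_of_monic _ _ fun j _ => (monic_X_sub_C _).pow _
  obtain ⟨ρ, hρ, hQ⟩ := exists_pos_sum_nodal_erase_eq_of_interlacing hlam hint hc
  have hpg : p = g * nodal univ lam := by
    rw [hp, nodal, ← prod_mul_distrib]
    exact prod_congr rfl fun j _ => by rw [← pow_succ, Nat.sub_add_cancel (hr j)]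
  have hqg : q = g * ∑ k, C (ρ k) * nodal (univ.erase k) lam := by rw [hq, ← hQ]; ring
  have hdeg : p.natDegree = m := by
    rw [hp, natDegree_prod_of_monic _ _ fun j _ => (monic_X_sub_C _).pow _, hm]
    simp
  have hB : IsBezoutMatrix p q H := fun x y => by rw [dotProduct_mulVec_powVec]; exact hH x y
  subst hpg hqg
  obtain ⟨n, rfl⟩ : ∃ n, m = n + 1 :=
    Nat.exists_eq_add_one.2 (hdeg ▸ Nat.zero_lt_of_lt (natDegree_mul_nodal_erase_lt lam hg 0))
  exact ⟨hB.posSemidef_of_mul_nodal (fun k => (hρ k).le) hg hdeg,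
    hB.mul_companionMatrix_isSymm (hg.mul nodal_monic) hdeg
      (by have := natDegree_mul_sum_nodal_erase_lt lam ρ hg; omega)⟩
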